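/- arXiv:math/0212177 — 2 statements merged into one kernel-verified Lean document; each statement's English description precedes it below -/
import Mathlib

section
/- Let G = ![![2,−1],![−1,2]], M = ![![1,−1],![1,0]], and b(x,y) = xᵀGy. Then for all α, β ∈ ℤ², the integer ∑_{p=0}^{5} p · b(Mᵖα, β) is divisible by 6. -/
open Matrix

theorem stmt6 :
    let G : Matrix (Fin 2) (Fin 2) ℤ := !![2, -1; -1, 2]
    let M : Matrix (Fin 2) (Fin 2) ℤ := !![1, -1; 1, 0]
    ∀ α β : Fin 2 → ℤ,
      (6 : ℤ) ∣ ∑ p ∈ Finset.range 6, (p : ℤ) * ((M ^ p).mulVec α ⬝ᵥ G.mulVec β) := by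
  intro G M α β
  refine ⟨-(α 0 * β 0) - α 0 * β 1 + 2 * (α 1 * β 0) - α 1 * β 1, ?_⟩
  simp [Finset.sum_range_succ, pow_succ, G, M, mulVec, dotProduct, Fin.sum_univ_two,
    Matrix.mul_apply]
  ring
end

section
/- Let G = ![![2,−1],![−1,2]], M = ![![1,−1],![1,0]], b(x,y) = xᵀGy, η = exp(πi/3) ∈ ℂ, and define τ(α) = 2^{−b(α,α)} · (1−η⁻¹)^{b(Mα,α)} · (1−η⁻²)^{b(M²α,α)} (integer powers of nonzero complex numbers). Then τ(Mα) = τ(α) for all α ∈ ℤ². -/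
open Matrix

def G9 : Matrix (Fin 2) (Fin 2) ℤ := !![2, -1; -1, 2]

def M9 : Matrix (Fin 2) (Fin 2) ℤ := !![1, -1; 1, 0]

def b9 (x y : Fin 2 → ℤ) : ℤ := x ⬝ᵥ G9.mulVec y

noncomputable def η9 : ℂ := Complex.exp (Real.pi * Complex.I / 3)

/-- The scalar function `τ` from the theory of relative σ-twisted vertex operators,
for the A₂ root lattice with twisted Coxeter element represented by `M9`. -/
noncomputable def τ9 (α : Fin 2 → ℤ) : ℂ :=
  (2 : ℂ) ^ (-(b9 α α)) * (1 - η9⁻¹) ^ (b9 (M9.mulVec α) α)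
    * (1 - η9⁻¹ ^ 2) ^ (b9 (M9.mulVec (M9.mulVec α)) α)

theorem stmt9 (α : Fin 2 → ℤ) : τ9 (M9.mulVec α) = τ9 α := by
  have h1 : b9 (M9.mulVec α) (M9.mulVec α) = b9 α α := by
    simp [b9, G9, M9, Matrix.mulVec, dotProduct, Fin.sum_univ_two]; ring
  have h2 : b9 (M9.mulVec (M9.mulVec α)) (M9.mulVec α) = b9 (M9.mulVec α) α := by
    simp [b9, G9, M9, Matrix.mulVec, dotProduct, Fin.sum_univ_two]; ring
  have h3 : b9 (M9.mulVec (M9.mulVec (M9.mulVec α))) (M9.mulVec α)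
      = b9 (M9.mulVec (M9.mulVec α)) α := by
    simp [b9, G9, M9, Matrix.mulVec, dotProduct, Fin.sum_univ_two]; ring
  unfold τ9
  rw [h1, h2, h3]
end
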